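/- Let E < E₀ and ρ ∈ 𝓜. Then S_E(ρ) = 𝓖_E(ρ, Φ(ρ)), i.e. the supremum defining S_E(ρ) is attained at the unique solution Φ(ρ) ∈ 𝓕_E of the Euler–Lagrange equation; moreover Φ(ρ) is the unique maximizer: 𝓖_E(ρ,φ) < S_E(ρ) for every φ ∈ 𝓕_E with φ ≠ Φ(ρ). -/

import Mathlib

/-!
Compared with `φ`, the functional at a competitor `ψ` differs by the first variation at `φ` in the
direction `ψ - φ`, minus two Bregman gaps: one of the strictly convex function `log (1 + eˣ)`
evaluated along `(φ, ψ)`, one of the concave function `gradTerm E` along `(φ', ψ')`. Both gaps are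
nonnegative. The Euler–Lagrange equation says that the first variation is the integral of the
derivative of `gradTermDeriv E (φ') * (ψ - φ)`; this function is absolutely continuous and
vanishes at `±1`, so the first variation is zero. Hence `φ` is a maximizer, and it is the only
one because the first gap is positive as soon as `ψ ≠ φ` somewhere.
-/

open Real MeasureTheory Set Filter Topology Function

noncomputable section

/-- Mobility `χ(a) = a(1−a)`. -/
def chi (a : ℝ) : ℝ := a * (1 - a)

/-- The set `𝓜`: measurable density profiles on `[−1,1]` with values in `[0,1]`. -/
def memM (ρ : ℝ → ℝ) : Prop :=
  Measurable ρ ∧ ∀ u ∈ Set.Icc (-1:ℝ) 1, ρ u ∈ Set.Icc (0:ℝ) 1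

/-- `φ ∈ 𝓕_E`, with explicit derivative function `d`: `φ` is `C¹` on `[−1,1]` with
Lipschitz derivative `d`, `φ(−1) = φ₋`, `φ(1) = φ₊`, and `d > max 0 E` on `[−1,1]`. -/
def memF (φm φp E : ℝ) (φ d : ℝ → ℝ) : Prop :=
  (∀ u ∈ Set.Icc (-1:ℝ) 1, HasDerivWithinAt φ (d u) (Set.Icc (-1:ℝ) 1) u) ∧
  (∃ L : NNReal, LipschitzOnWith L d (Set.Icc (-1:ℝ) 1)) ∧
  φ (-1) = φm ∧ φ 1 = φp ∧
  (∀ u ∈ Set.Icc (-1:ℝ) 1, max 0 E < d u)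

/-- The Euler–Lagrange equation `φ''/(φ'(φ'−E)) + 1/(1+e^φ) = ρ` holds Lebesgue-a.e.
on `(−1,1)`, where `d = φ'`. -/
def solvesEL (E : ℝ) (ρ φ d : ℝ → ℝ) : Prop :=
  ∀ᵐ u ∂(volume : Measure ℝ), u ∈ Set.Ioo (-1:ℝ) 1 →
    ∃ d2 : ℝ, HasDerivAt d d2 u ∧
      d2 / (d u * (d u - E)) + 1 / (1 + Real.exp (φ u)) = ρ u

/-- The functional `𝓖_E(ρ,φ)` (with `d = φ'`), including the `E = 0` case.
Recall the convention `0 log 0 = 0` (in Lean `Real.log 0 = 0`). -/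
def GEint (E A : ℝ) (ρ φ d : ℝ → ℝ) : ℝ :=
  ∫ u in (-1:ℝ)..1,
    (ρ u * Real.log (ρ u) + (1 - ρ u) * Real.log (1 - ρ u)
      + (1 - ρ u) * φ u - Real.log (1 + Real.exp (φ u))
      + (if E = 0 then Real.log (d u) + 1
         else E⁻¹ * (d u * Real.log (d u) - (d u - E) * Real.log (d u - E)))
      - A)

/-- `S_E(ρ) = sup_{φ ∈ 𝓕_E} 𝓖_E(ρ,φ)`. -/
def SE (φm φp E A : ℝ) (ρ : ℝ → ℝ) : ℝ :=
  sSup { x | ∃ φ d : ℝ → ℝ, memF φm φp E φ d ∧ x = GEint E A ρ φ d }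

theorem StrictMonoOn.add_mul_sub_lt_of_hasDerivAt {f f' : ℝ → ℝ} {S : Set ℝ} (hS : Convex ℝ S)
    (hf : ∀ x ∈ S, HasDerivAt f (f' x) x) (hf' : StrictMonoOn f' S) {x y : ℝ}
    (hx : x ∈ S) (hy : y ∈ S) (hxy : y ≠ x) : f x + f' x * (y - x) < f y := by
  have mvt : ∀ {a b}, a ∈ S → b ∈ S → a < b →
      ∃ c ∈ Ioo a b, c ∈ S ∧ f b - f a = f' c * (b - a) := by
    intro a b ha hb hab
    have hab' : Icc a b ⊆ S := hS.ordConnected.out ha hb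
    obtain ⟨c, hc, hslope⟩ := exists_hasDerivAt_eq_slope f f' hab
      (fun z hz => (hf z (hab' hz)).continuousAt.continuousWithinAt)
      (fun z hz => hf z (hab' (Ioo_subset_Icc_self hz)))
    exact ⟨c, hc, hab' (Ioo_subset_Icc_self hc),
      by rw [hslope, div_mul_cancel₀ _ (sub_ne_zero.2 hab.ne')]⟩
  rcases hxy.lt_or_gt with hyx | hxy
  · obtain ⟨c, hc, hcS, hfc⟩ := mvt hy hx hyx
    have : f' c < f' x := hf' hcS hx hc.2
    nlinarith
  · obtain ⟨c, hc, hcS, hfc⟩ := mvt hx hy hxy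
    have : f' x < f' c := hf' hx hcS hc.1
    nlinarith

theorem StrictAntiOn.lt_add_mul_sub_of_hasDerivAt {f f' : ℝ → ℝ} {S : Set ℝ} (hS : Convex ℝ S)
    (hf : ∀ x ∈ S, HasDerivAt f (f' x) x) (hf' : StrictAntiOn f' S) {x y : ℝ}
    (hx : x ∈ S) (hy : y ∈ S) (hxy : y ≠ x) : f y < f x + f' x * (y - x) := by
  have := hf'.neg.add_mul_sub_lt_of_hasDerivAt hS (f := fun z => -f z)
    (fun z hz => (hf z hz).neg) hx hy hxy
  linarith

def softplus (x : ℝ) : ℝ := log (1 + exp x)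

theorem hasDerivAt_softplus (x : ℝ) : HasDerivAt softplus (sigmoid x) x := by
  convert ((hasDerivAt_exp x).const_add 1).log (by positivity) using 1
  · rfl
  · rw [sigmoid_def, exp_neg]
    field_simp
    ring

theorem continuous_softplus : Continuous softplus :=
  continuous_iff_continuousAt.2 fun x => (hasDerivAt_softplus x).continuousAt

theorem one_sub_sigmoid (x : ℝ) : 1 - sigmoid x = 1 / (1 + exp x) := by
  rw [← sigmoid_neg, sigmoid_def, neg_neg, one_div]

def softplusBregman (x y : ℝ) : ℝ := softplus y - softplus x - sigmoid x * (y - x)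

theorem softplusBregman_pos {x y : ℝ} (hxy : y ≠ x) : 0 < softplusBregman x y := by
  have := (sigmoid_strictMono.strictMonoOn univ).add_mul_sub_lt_of_hasDerivAt convex_univ
    (fun z _ => hasDerivAt_softplus z) (mem_univ x) (mem_univ y) hxy
  unfold softplusBregman
  linarith

theorem softplusBregman_nonneg (x y : ℝ) : 0 ≤ softplusBregman x y := by
  rcases eq_or_ne y x with rfl | hxy
  · simp [softplusBregman]
  · exact (softplusBregman_pos hxy).le

theorem ContinuousOn.softplusBregman {f g : ℝ → ℝ} {s : Set ℝ} (hf : ContinuousOn f s)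
    (hg : ContinuousOn g s) : ContinuousOn (fun u => softplusBregman (f u) (g u)) s :=
  ((continuous_softplus.comp_continuousOn hg).sub (continuous_softplus.comp_continuousOn hf)).sub
    ((continuous_sigmoid.comp_continuousOn hf).mul (hg.sub hf))

/-- The `φ'`-dependent part of the integrand of `𝓖_E`, as a function of `p = φ'`. -/
def gradTerm (E p : ℝ) : ℝ :=
  if E = 0 then log p + 1 else E⁻¹ * (p * log p - (p - E) * log (p - E))

def gradTermDeriv (E p : ℝ) : ℝ :=
  if E = 0 then p⁻¹ else E⁻¹ * (log p - log (p - E))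

section gradTerm

variable {E p : ℝ}

theorem hasDerivAt_gradTerm (hp : max 0 E < p) :
    HasDerivAt (gradTerm E) (gradTermDeriv E p) p := by
  have hp0 : p ≠ 0 := (lt_of_le_of_lt (le_max_left _ _) hp).ne'
  have hpE : p - E ≠ 0 := (sub_pos.2 (lt_of_le_of_lt (le_max_right _ _) hp)).ne'
  unfold gradTerm gradTermDeriv
  split_ifs with hE
  · simpa using (hasDerivAt_log hp0).add_const 1
  · have hmulLog : ∀ q : ℝ, q ≠ 0 → HasDerivAt (fun x => x * log x) (log q + 1) q := fun q hq =>
      ((hasDerivAt_id q).mul (hasDerivAt_log hq)).congr_deriv (by simp [hq])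
    have h : HasDerivAt (fun x => x * log x - (x - E) * log (x - E))
        (log p + 1 - (log (p - E) + 1)) p :=
      (hmulLog p hp0).sub ((hmulLog (p - E) hpE).comp_sub_const p E)
    exact (h.const_mul E⁻¹).congr_deriv (by ring)

theorem hasDerivAt_gradTermDeriv (hp : max 0 E < p) :
    HasDerivAt (gradTermDeriv E) (-(p * (p - E))⁻¹) p := by
  have hp0 : p ≠ 0 := (lt_of_le_of_lt (le_max_left _ _) hp).ne'
  have hpE : p - E ≠ 0 := (sub_pos.2 (lt_of_le_of_lt (le_max_right _ _) hp)).ne'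
  unfold gradTermDeriv
  split_ifs with hE
  · simpa [hE, sq] using hasDerivAt_inv hp0
  · have h : HasDerivAt (fun x => log x - log (x - E)) (p⁻¹ - (p - E)⁻¹) p :=
      (hasDerivAt_log hp0).sub ((hasDerivAt_log hpE).comp_sub_const p E)
    exact (h.const_mul E⁻¹).congr_deriv (by field_simp; ring)

theorem continuousOn_gradTerm : ContinuousOn (gradTerm E) (Ioi (max 0 E)) :=
  fun _ hp => (hasDerivAt_gradTerm hp).continuousAt.continuousWithinAt

theorem continuousOn_gradTermDeriv : ContinuousOn (gradTermDeriv E) (Ioi (max 0 E)) :=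
  fun _ hp => (hasDerivAt_gradTermDeriv hp).continuousAt.continuousWithinAt

theorem strictAntiOn_gradTermDeriv : StrictAntiOn (gradTermDeriv E) (Ioi (max 0 E)) := by
  refine strictAntiOn_of_deriv_neg (convex_Ioi _) continuousOn_gradTermDeriv fun p hp => ?_
  rw [interior_Ioi] at hp
  have hp0 : 0 < p := lt_of_le_of_lt (le_max_left _ _) hp
  have hpE : 0 < p - E := sub_pos.2 (lt_of_le_of_lt (le_max_right _ _) hp)
  rw [(hasDerivAt_gradTermDeriv hp).deriv, neg_lt_zero]
  positivity

theorem exists_lipschitzOnWith_gradTermDeriv {c : ℝ} (hc : max 0 E < c) :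
    ∃ K, LipschitzOnWith K (gradTermDeriv E) (Ici c) := by
  have hc0 : 0 < c := lt_of_le_of_lt (le_max_left _ _) hc
  have hcE : 0 < c - E := sub_pos.2 (lt_of_le_of_lt (le_max_right _ _) hc)
  refine ⟨(c * (c - E))⁻¹.toNNReal, (convex_Ici c).lipschitzOnWith_of_nnnorm_hasDerivWithin_le
    (fun p hp => (hasDerivAt_gradTermDeriv (lt_of_lt_of_le hc hp)).hasDerivWithinAt)
    fun p (hp : c ≤ p) => ?_⟩
  rw [← NNReal.coe_le_coe, coe_nnnorm, Real.coe_toNNReal _ (by positivity), norm_neg, norm_inv,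
    Real.norm_of_nonneg (by nlinarith)]
  exact inv_anti₀ (by positivity) (by nlinarith)

end gradTerm

def gradTermBregman (E p q : ℝ) : ℝ := gradTerm E p + gradTermDeriv E p * (q - p) - gradTerm E q

theorem gradTermBregman_nonneg {E p q : ℝ} (hp : max 0 E < p) (hq : max 0 E < q) :
    0 ≤ gradTermBregman E p q := by
  rcases eq_or_ne q p with rfl | hpq
  · simp [gradTermBregman]
  · have := strictAntiOn_gradTermDeriv.lt_add_mul_sub_of_hasDerivAt (convex_Ioi _)
      (fun z hz => hasDerivAt_gradTerm hz) hp hq hpq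
    unfold gradTermBregman
    linarith

namespace memF

variable {φm φp E : ℝ} {φ d : ℝ → ℝ}

theorem continuousOn (hF : memF φm φp E φ d) : ContinuousOn φ (Icc (-1) 1) :=
  fun u hu => (hF.1 u hu).continuousWithinAt

theorem continuousOn_deriv (hF : memF φm φp E φ d) : ContinuousOn d (Icc (-1) 1) :=
  let ⟨_, hL⟩ := hF.2.1; hL.continuousOn

theorem mapsTo_deriv (hF : memF φm φp E φ d) : MapsTo d (Icc (-1) 1) (Ioi (max 0 E)) :=
  hF.2.2.2.2

theorem hasDerivAt (hF : memF φm φp E φ d) {u : ℝ} (hu : u ∈ Ioo (-1) 1) :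
    HasDerivAt φ (d u) u :=
  (hF.1 u (Ioo_subset_Icc_self hu)).hasDerivAt (Icc_mem_nhds hu.1 hu.2)

theorem absolutelyContinuousOnInterval (hF : memF φm φp E φ d) :
    AbsolutelyContinuousOnInterval φ (-1) 1 := by
  obtain ⟨B, hB⟩ := isCompact_Icc.exists_bound_of_continuousOn hF.continuousOn_deriv
  refine LipschitzOnWith.absolutelyContinuousOnInterval (K := B.toNNReal) ?_
  rw [uIcc_of_le (by norm_num)]
  exact (convex_Icc _ _).lipschitzOnWith_of_nnnorm_hasDerivWithin_le hF.1
    fun u hu => by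
      rw [← NNReal.coe_le_coe, coe_nnnorm]
      exact (hB u hu).trans (Real.le_coe_toNNReal B)

theorem absolutelyContinuousOnInterval_gradTermDeriv (hF : memF φm φp E φ d) :
    AbsolutelyContinuousOnInterval (fun u => gradTermDeriv E (d u)) (-1) 1 := by
  obtain ⟨u₀, hu₀, hmin⟩ :=
    isCompact_Icc.exists_isMinOn (nonempty_Icc.2 (by norm_num)) hF.continuousOn_deriv
  obtain ⟨K, hK⟩ := exists_lipschitzOnWith_gradTermDeriv (hF.mapsTo_deriv hu₀)
  obtain ⟨L, hL⟩ := hF.2.1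
  refine LipschitzOnWith.absolutelyContinuousOnInterval (K := K * L) ?_
  rw [uIcc_of_le (by norm_num)]
  exact hK.comp hL fun u hu => mem_Ici.2 (hmin hu)

end memF

theorem memM.integrableOn_comp {ρ h : ℝ → ℝ} (hρ : memM ρ) (hh : Continuous h) :
    IntegrableOn (fun u => h (ρ u)) (Icc (-1) 1) := by
  obtain ⟨C, hC⟩ := isCompact_Icc.exists_bound_of_continuousOn (hh.continuousOn (s := Icc 0 1))
  exact Measure.integrableOn_of_bounded measure_Icc_lt_top.ne
    (hh.measurable.comp hρ.1).aestronglyMeasurable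
    (ae_restrict_of_forall_mem measurableSet_Icc fun u hu => hC _ (hρ.2 u hu))

section functional

variable {φm φp E A : ℝ} {ρ φ d ψ e : ℝ → ℝ}

theorem GEint_eq : GEint E A ρ φ d = ∫ u in (-1:ℝ)..1,
    (-binEntropy (ρ u) + (1 - ρ u) * φ u - softplus (φ u) + gradTerm E (d u) - A) := by
  unfold GEint
  congr 1 with u
  simp only [binEntropy, log_inv, softplus, gradTerm]
  ring

theorem intervalIntegrable_GEint_integrand (hρ : memM ρ) (hF : memF φm φp E φ d) :
    IntervalIntegrable
      (fun u => -binEntropy (ρ u) + (1 - ρ u) * φ u - softplus (φ u) + gradTerm E (d u) - A)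
      volume (-1) 1 := by
  refine IntegrableOn.intervalIntegrable ?_
  rw [uIcc_of_le (by norm_num)]
  have hcont : ContinuousOn (fun u => -softplus (φ u) + gradTerm E (d u) - A) (Icc (-1) 1) :=
    ((continuous_softplus.comp_continuousOn hF.continuousOn).neg.add
      (continuousOn_gradTerm.comp hF.continuousOn_deriv hF.mapsTo_deriv)).sub continuousOn_const
  have hρφ : IntegrableOn (fun u => (1 - ρ u) * φ u) (Icc (-1) 1) :=
    (hρ.integrableOn_comp (continuous_const.sub continuous_id)).mul_continuousOn
      hF.continuousOn isCompact_Icc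
  refine (((hρ.integrableOn_comp binEntropy_continuous).neg.add hρφ).add
    hcont.integrableOn_Icc).congr_fun (fun u _ => ?_) measurableSet_Icc
  simp only [Pi.add_apply, Pi.neg_apply]
  ring

theorem integral_firstVariation_eq_zero (hF : memF φm φp E φ d) (hG : memF φm φp E ψ e)
    (hEL : solvesEL E ρ φ d) :
    ∫ u in (-1:ℝ)..1, ((1 - sigmoid (φ u) - ρ u) * (ψ u - φ u)
      + gradTermDeriv E (d u) * (e u - d u)) = 0 := by
  set F : ℝ → ℝ := fun u => gradTermDeriv E (d u) * (ψ u - φ u)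
  have hFac : AbsolutelyContinuousOnInterval F (-1) 1 :=
    hF.absolutelyContinuousOnInterval_gradTermDeriv.fun_mul
      (hG.absolutelyContinuousOnInterval.sub hF.absolutelyContinuousOnInterval)
  have hderiv : ∀ᵐ u, u ∈ uIoc (-1:ℝ) 1 → deriv F u =
      (1 - sigmoid (φ u) - ρ u) * (ψ u - φ u) + gradTermDeriv E (d u) * (e u - d u) := by
    rw [uIoc_of_le (by norm_num)]
    filter_upwards [hEL, Measure.ae_ne volume 1] with u hELu hu1 hu
    have hu' : u ∈ Ioo (-1:ℝ) 1 := ⟨hu.1, hu.2.lt_of_ne hu1⟩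
    obtain ⟨d2, hd2, hEq⟩ := hELu hu'
    have hdu := hF.mapsTo_deriv (Ioo_subset_Icc_self hu')
    have hden : d u * (d u - E) ≠ 0 :=
      (mul_pos (lt_of_le_of_lt (le_max_left _ _) hdu)
        (sub_pos.2 (lt_of_le_of_lt (le_max_right _ _) hdu))).ne'
    have hcoef : -(d u * (d u - E))⁻¹ * d2 = 1 - sigmoid (φ u) - ρ u := by
      rw [one_sub_sigmoid, ← hEq]
      field_simp
      ring
    have hFderiv : HasDerivAt F (-(d u * (d u - E))⁻¹ * d2 * (ψ u - φ u)
        + gradTermDeriv E (d u) * (e u - d u)) u :=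
      ((hasDerivAt_gradTermDeriv hdu).comp u hd2).mul ((hG.hasDerivAt hu').sub (hF.hasDerivAt hu'))
    rw [hFderiv.deriv, hcoef]
  rw [← intervalIntegral.integral_congr_ae hderiv, hFac.integral_deriv_eq_sub]
  obtain ⟨-, -, hφl, hφr, -⟩ := hF
  obtain ⟨-, -, hψl, hψr, -⟩ := hG
  simp [F, hφl, hφr, hψl, hψr]

theorem GEint_eq_sub_bregman (hρ : memM ρ) (hF : memF φm φp E φ d) (hG : memF φm φp E ψ e)
    (hEL : solvesEL E ρ φ d) :
    GEint E A ρ ψ e = GEint E A ρ φ d - (∫ u in (-1:ℝ)..1, softplusBregman (φ u) (ψ u))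
      - ∫ u in (-1:ℝ)..1, gradTermBregman E (d u) (e u) := by
  have hsoft : IntervalIntegrable (fun u => softplusBregman (φ u) (ψ u)) volume (-1) 1 :=
    (hF.continuousOn.softplusBregman hG.continuousOn).intervalIntegrable_of_Icc (by norm_num)
  have hgrad : IntervalIntegrable (fun u => gradTermBregman E (d u) (e u)) volume (-1) 1 := by
    refine ContinuousOn.intervalIntegrable_of_Icc (by norm_num) ?_
    have hd := hF.continuousOn_deriv
    exact ((continuousOn_gradTerm.comp hd hF.mapsTo_deriv).add
      ((continuousOn_gradTermDeriv.comp hd hF.mapsTo_deriv).mul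
        (hG.continuousOn_deriv.sub hd))).sub
      (continuousOn_gradTerm.comp hG.continuousOn_deriv hG.mapsTo_deriv)
  have hvar := integral_firstVariation_eq_zero (ρ := ρ) hF hG hEL
  -- the first variation is the difference of the two integrands plus the two Bregman gaps
  rw [intervalIntegral.integral_congr (g := fun u =>
      (-binEntropy (ρ u) + (1 - ρ u) * ψ u - softplus (ψ u) + gradTerm E (e u) - A)
      - (-binEntropy (ρ u) + (1 - ρ u) * φ u - softplus (φ u) + gradTerm E (d u) - A)
      + softplusBregman (φ u) (ψ u) + gradTermBregman E (d u) (e u))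
      (fun u _ => by simp only [softplusBregman, gradTermBregman]; ring),
    intervalIntegral.integral_add (((intervalIntegrable_GEint_integrand hρ hG).sub
      (intervalIntegrable_GEint_integrand hρ hF)).add hsoft) hgrad,
    intervalIntegral.integral_add ((intervalIntegrable_GEint_integrand hρ hG).sub
      (intervalIntegrable_GEint_integrand hρ hF)) hsoft,
    intervalIntegral.integral_sub (intervalIntegrable_GEint_integrand hρ hG)
      (intervalIntegrable_GEint_integrand hρ hF)] at hvar
  rw [GEint_eq, GEint_eq]
  linarith

theorem integral_gradTermBregman_nonneg (hF : memF φm φp E φ d) (hG : memF φm φp E ψ e) :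
    0 ≤ ∫ u in (-1:ℝ)..1, gradTermBregman E (d u) (e u) :=
  intervalIntegral.integral_nonneg (by norm_num) fun u hu =>
    gradTermBregman_nonneg (hF.mapsTo_deriv hu) (hG.mapsTo_deriv hu)

theorem GEint_le (hρ : memM ρ) (hF : memF φm φp E φ d) (hG : memF φm φp E ψ e)
    (hEL : solvesEL E ρ φ d) : GEint E A ρ ψ e ≤ GEint E A ρ φ d := by
  have hsoft : 0 ≤ ∫ u in (-1:ℝ)..1, softplusBregman (φ u) (ψ u) :=
    intervalIntegral.integral_nonneg (by norm_num) fun u _ => softplusBregman_nonneg _ _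
  rw [GEint_eq_sub_bregman hρ hF hG hEL]
  linarith [integral_gradTermBregman_nonneg hF hG]

theorem GEint_lt (hρ : memM ρ) (hF : memF φm φp E φ d) (hG : memF φm φp E ψ e)
    (hEL : solvesEL E ρ φ d) (hne : ¬EqOn ψ φ (Icc (-1) 1)) :
    GEint E A ρ ψ e < GEint E A ρ φ d := by
  obtain ⟨u₀, hu₀, hne₀⟩ : ∃ u ∈ Icc (-1:ℝ) 1, ψ u ≠ φ u := by
    simpa only [EqOn, not_forall, exists_prop] using hne
  have hsoft : 0 < ∫ u in (-1:ℝ)..1, softplusBregman (φ u) (ψ u) := by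
    simpa using intervalIntegral.integral_lt_integral_of_continuousOn_of_le_of_exists_lt
      (by norm_num) continuousOn_const (hF.continuousOn.softplusBregman hG.continuousOn)
      (fun u _ => softplusBregman_nonneg _ _) ⟨u₀, hu₀, softplusBregman_pos hne₀⟩
  rw [GEint_eq_sub_bregman hρ hF hG hEL]
  linarith [integral_gradTermBregman_nonneg hF hG]

end functional

theorem stmt9_general (φm φp : ℝ) (E A : ℝ)
    (ρ : ℝ → ℝ) (hρ : memM ρ)
    (φ d : ℝ → ℝ) (hF : memF φm φp E φ d) (hEL : solvesEL E ρ φ d) :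
    SE φm φp E A ρ = GEint E A ρ φ d ∧
    (∀ ψ e : ℝ → ℝ, memF φm φp E ψ e → ¬ Set.EqOn ψ φ (Set.Icc (-1:ℝ) 1) →
      GEint E A ρ ψ e < SE φm φp E A ρ) := by
  have hSE : SE φm φp E A ρ = GEint E A ρ φ d :=
    IsGreatest.csSup_eq ⟨⟨φ, d, hF, rfl⟩, by
      rintro _ ⟨ψ, e, hG, rfl⟩
      exact GEint_le hρ hF hG hEL⟩
  exact ⟨hSE, fun ψ e hG hne => hSE ▸ GEint_lt hρ hF hG hEL hne⟩

/-- The supremum defining `S_E(ρ)` is attained exactly at the solution `Φ(ρ)` of the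
Euler–Lagrange equation, which is the unique maximizer. -/
theorem stmt9 (ρm ρp φm φp E0 : ℝ)
    (h0 : 0 < ρm) (h1 : ρm < ρp) (h2 : ρp < 1)
    (hφm : φm = Real.log (ρm / (1 - ρm))) (hφp : φp = Real.log (ρp / (1 - ρp)))
    (hE0 : E0 = (φp - φm) / 2) (E J A : ℝ) (hE : E < E0)
    (hJneg : J ≤ 0) (hJeq : (1/2) * (∫ r in ρm..ρp, (E * chi r - J)⁻¹) = 1)
    (hA : A = if E = 0 then Real.log ((ρp - ρm) / 2) + 1
      else Real.log (-J) + (1/2) * ∫ r in ρm..ρp, (E * chi r)⁻¹ * Real.log (1 - E * chi r / J))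
    (ρ : ℝ → ℝ) (hρ : memM ρ)
    (φ d : ℝ → ℝ) (hF : memF φm φp E φ d) (hEL : solvesEL E ρ φ d) :
    SE φm φp E A ρ = GEint E A ρ φ d ∧
    (∀ ψ e : ℝ → ℝ, memF φm φp E ψ e → ¬ Set.EqOn ψ φ (Set.Icc (-1:ℝ) 1) →
      GEint E A ρ ψ e < SE φm φp E A ρ) :=
  stmt9_general φm φp E A ρ hρ φ d hF hEL
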